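/- For integers n ≥ 1, 0 ≤ t ≤ n-2, and 1 ≤ m ≤ n-t-1, the number of inversion sequences of length n avoiding 102, 201, and 101 with rank t and maximum value m equals ((t+1)/(m+t+1)) · C(2m+t, m) · C(n-t-2, m-1). -/

import Mathlib

/-- An inversion sequence of length `n`, 1-indexed: `0 ≤ e i ≤ i - 1` for `1 ≤ i ≤ n`,
normalized to be `0` outside `[1, n]`. -/
def IsInvSeq (n : ℕ) (e : ℕ → ℕ) : Prop :=
  e 0 = 0 ∧ (∀ i, 1 ≤ i → i ≤ n → e i < i) ∧ ∀ i, n < i → e i = 0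

/-- `e` contains a length-3 pattern described by the relation `P` on values. -/
def Contains (n : ℕ) (P : ℕ → ℕ → ℕ → Prop) (e : ℕ → ℕ) : Prop :=
  ∃ i j k, 1 ≤ i ∧ i < j ∧ j < k ∧ k ≤ n ∧ P (e i) (e j) (e k)

def Pat102 (a b c : ℕ) : Prop := b < a ∧ a < c
def Pat001 (a b c : ℕ) : Prop := a = b ∧ b < c
def Pat011 (a b c : ℕ) : Prop := a < b ∧ b = c
def Pat012 (a b c : ℕ) : Prop := a < b ∧ b < c
def Pat021 (a b c : ℕ) : Prop := a < c ∧ c < b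
def Pat110 (a b c : ℕ) : Prop := a = b ∧ c < b
def Pat120 (a b c : ℕ) : Prop := c < a ∧ a < b
def Pat201 (a b c : ℕ) : Prop := b < c ∧ c < a
def Pat210 (a b c : ℕ) : Prop := c < b ∧ b < a
def Pat101 (a b c : ℕ) : Prop := a = c ∧ b < a

/-- `p` is the position of the first descent of `e` (with convention `e (n+1) = -1`,
i.e. there is always a descent at position `n`). -/
def PrMax (n : ℕ) (e : ℕ → ℕ) (p : ℕ) : Prop :=
  1 ≤ p ∧ p ≤ n ∧ (∀ i, 1 ≤ i → i < p → e i ≤ e (i + 1)) ∧ (p = n ∨ e (p + 1) < e p)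

/-- `e` has rank `t`, i.e. `t = prmax e - max e - 1`. -/
def HasRank (n : ℕ) (e : ℕ → ℕ) (t : ℕ) : Prop :=
  ∃ p, PrMax n e p ∧ p = e p + t + 1

/-- `m` is the maximum value of `e` on `[1, n]`. -/
def IsMaxVal (n : ℕ) (e : ℕ → ℕ) (m : ℕ) : Prop :=
  (∀ i, 1 ≤ i → i ≤ n → e i ≤ m) ∧ ∃ i, 1 ≤ i ∧ i ≤ n ∧ e i = m


/-!
Since each of 102, 201 and 101 has its middle entry strictly below the two others, avoiding all
three forces `e` to be a "tent": weakly increasing up to its first descent `p`, where it attains its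
maximum `m`, then weakly decreasing with values `< m` (an entry above `e p` after `p` would create a
102 with the descent, an ascent after `p` a 201 or a 101 with the peak). Conversely a tent contains
none of them. The rank condition reads `p = m + t + 1`, and a tent is the same as a pair of
independent halves: a weakly increasing inversion sequence `e 1 ≤ ⋯ ≤ e (m + t) ≤ m`, counted by
the ballot number `(t + 1) / (m + t + 1) · C(2m + t, m)`, and a weakly decreasing word of length
`n - m - t - 1` over `{0, …, m - 1}`, counted by `C(n - t - 2, m - 1)`. Both counts follow from the
Pascal-type recursion obtained by asking whether the last entry of a weakly increasing sequence
reaches its bound.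
-/

open Set Function

def monoSeqs (c : ℕ → ℕ) (M k : ℕ) : Set (ℕ → ℕ) :=
  {f | MonotoneOn f (Iio k) ∧ (∀ i < k, f i ≤ c i ∧ f i ≤ M) ∧ ∀ i, k ≤ i → f i = 0}

section monoSeqs

variable {c : ℕ → ℕ} {M k : ℕ}

lemma monoSeqs_finite (c : ℕ → ℕ) (M k : ℕ) : (monoSeqs c M k).Finite := by
  refine (finite_range fun g : Fin k → Fin (M + 1) =>
    fun i => if h : i < k then (g ⟨i, h⟩ : ℕ) else 0).subset ?_
  rintro f ⟨-, hbound, hzero⟩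
  refine ⟨fun i => ⟨f i, Nat.lt_succ_of_le (hbound i i.isLt).2⟩, funext fun i => ?_⟩
  by_cases hi : i < k
  · simp [hi]
  · simp [hi, hzero i (not_lt.mp hi)]

lemma zero_mem_monoSeqs : (0 : ℕ → ℕ) ∈ monoSeqs c M k :=
  ⟨fun _ _ _ _ _ => le_rfl, fun _ _ => ⟨Nat.zero_le _, Nat.zero_le _⟩, fun _ _ => rfl⟩

lemma monoSeqs_bound_zero : monoSeqs c 0 k = {0} := by
  refine eq_singleton_iff_unique_mem.2 ⟨zero_mem_monoSeqs, fun f hf => funext fun i => ?_⟩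
  rcases lt_or_ge i k with hi | hi
  · exact Nat.le_zero.mp (hf.2.1 i hi).2
  · exact hf.2.2 i hi

lemma monoSeqs_length_zero : monoSeqs c M 0 = {0} :=
  eq_singleton_iff_unique_mem.2
    ⟨zero_mem_monoSeqs, fun _ hf => funext fun i => hf.2.2 i (Nat.zero_le i)⟩

lemma monoSeqs_succ_of_forall_le (h : ∀ i < k, c i ≤ M) :
    monoSeqs c (M + 1) k = monoSeqs c M k := by
  ext f
  refine and_congr_right fun _ => and_congr_left fun _ => forall₂_congr fun i hi => ?_
  exact ⟨fun hf => ⟨hf.1, hf.1.trans (h i hi)⟩, fun hf => ⟨hf.1, hf.2.trans M.le_succ⟩⟩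

lemma monoSeqs_succ_succ (h : M + 1 ≤ c k) :
    monoSeqs c (M + 1) (k + 1) =
      monoSeqs c M (k + 1) ∪ (fun g => update g k (M + 1)) '' monoSeqs c (M + 1) k := by
  ext f
  constructor
  · rintro ⟨hmono, hbound, hzero⟩
    rcases (hbound k (lt_add_one k)).2.lt_or_eq with hlt | heq
    · refine Or.inl ⟨hmono, fun i hi => ⟨(hbound i hi).1, ?_⟩, hzero⟩
      exact (hmono hi (lt_add_one k) (Nat.le_of_lt_succ hi)).trans (Nat.le_of_lt_succ hlt)
    · refine Or.inr ⟨update f k 0, ⟨fun i hi j hj hij => ?_, fun i hi => ?_, fun i hi => ?_⟩, ?_⟩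
      · rw [update_of_ne hi.out.ne, update_of_ne hj.out.ne]
        exact hmono (Nat.lt_succ_of_lt hi) (Nat.lt_succ_of_lt hj) hij
      · rw [update_of_ne hi.ne]
        exact hbound i (Nat.lt_succ_of_lt hi)
      · rcases hi.eq_or_lt with rfl | hi
        · exact update_self _ _ _
        · rw [update_of_ne hi.ne']
          exact hzero i hi
      · dsimp only
        rw [update_idem, ← heq, update_eq_self]
  · rintro (⟨hmono, hbound, hzero⟩ | ⟨g, ⟨hmono, hbound, hzero⟩, rfl⟩)
    · exact ⟨hmono, fun i hi => ⟨(hbound i hi).1, (hbound i hi).2.trans M.le_succ⟩, hzero⟩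
    · dsimp only
      have hgM : ∀ i ≤ k, g i ≤ M + 1 := fun i hi => by
        rcases hi.lt_or_eq with hi | rfl
        · exact (hbound i hi).2
        · rw [hzero i le_rfl]; exact Nat.zero_le _
      refine ⟨fun i hi j hj hij => ?_, fun i hi => ?_, fun i hi => ?_⟩
      · rcases (Nat.le_of_lt_succ hj.out).lt_or_eq with hj | rfl
        · rw [update_of_ne (hij.trans_lt hj).ne, update_of_ne hj.ne]
          exact hmono (hij.trans_lt hj) hj hij
        · rw [update_self]
          rcases eq_or_ne i j with rfl | hi
          · rw [update_self]
          · rw [update_of_ne hi]; exact hgM i hij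
      · rcases (Nat.le_of_lt_succ hi).lt_or_eq with hi | rfl
        · rw [update_of_ne hi.ne]; exact hbound i hi
        · rw [update_self]; exact ⟨h, le_rfl⟩
      · rw [update_of_ne (by omega)]
        exact hzero i (by omega)

lemma ncard_monoSeqs_succ_succ (h : M + 1 ≤ c k) :
    (monoSeqs c (M + 1) (k + 1)).ncard =
      (monoSeqs c M (k + 1)).ncard + (monoSeqs c (M + 1) k).ncard := by
  have hinj : InjOn (fun g => update g k (M + 1)) (monoSeqs c (M + 1) k) := by
    intro g hg g' hg' hgg
    funext i
    rcases eq_or_ne i k with rfl | hi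
    · rw [hg.2.2 i le_rfl, hg'.2.2 i le_rfl]
    · simpa [hi] using congrFun hgg i
  have hdisj : Disjoint (monoSeqs c M (k + 1))
      ((fun g => update g k (M + 1)) '' monoSeqs c (M + 1) k) := by
    rw [disjoint_left]
    rintro _ hf ⟨g, -, rfl⟩
    simpa using (hf.2.1 k (lt_add_one k)).2
  rw [monoSeqs_succ_succ h,
    ncard_union_eq hdisj (monoSeqs_finite ..) ((monoSeqs_finite ..).image _), hinj.ncard_image]

theorem ncard_monoSeqs_of_forall_le (k M : ℕ) (hc : ∀ i, M ≤ c i) :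
    (monoSeqs c M k).ncard = (k + M).choose M := by
  induction k generalizing M with
  | zero => rw [monoSeqs_length_zero, ncard_singleton, zero_add, Nat.choose_self]
  | succ k ihk =>
    induction M with
    | zero => rw [monoSeqs_bound_zero, ncard_singleton, Nat.choose_zero_right]
    | succ M ihM =>
      rw [ncard_monoSeqs_succ_succ (hc k), ihM fun i => (hc i).trans' M.le_succ, ihk (M + 1) hc,
        show k + 1 + (M + 1) = k + 1 + M + 1 by ring, Nat.choose_succ_succ',
        show k + (M + 1) = k + 1 + M by ring]

theorem ncard_monoSeqs_id_add_choose (k M : ℕ) (hM : M ≤ k) :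
    (monoSeqs id M k).ncard + (k + M).choose (k + 1) = (k + M).choose k := by
  induction k generalizing M with
  | zero => obtain rfl := Nat.le_zero.mp hM; simp [monoSeqs_length_zero]
  | succ k ihk =>
    induction M with
    | zero => simp [monoSeqs_bound_zero]
    | succ M ihM =>
      have pascal₁ := Nat.choose_succ_succ' (k + 1 + M) (k + 1)
      have pascal₂ := Nat.choose_succ_succ' (k + 1 + M) k
      rw [show k + 1 + M + 1 = k + 1 + (M + 1) by ring] at pascal₁ pascal₂
      have ih₁ := ihM (by omega)
      rcases (Nat.le_of_succ_le_succ hM).lt_or_eq with hMk | rfl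
      · rw [ncard_monoSeqs_succ_succ (c := id) hMk]
        have ih₂ := ihk (M + 1) hMk
        rw [show k + (M + 1) = k + 1 + M by ring] at ih₂
        omega
      · rw [monoSeqs_succ_of_forall_le (c := id) (k := M + 1) fun i hi => Nat.le_of_lt_succ hi]
        have hsymm := Nat.choose_symm_half M
        rw [show 2 * M + 1 = M + 1 + M by ring] at hsymm
        omega

theorem mul_ncard_monoSeqs_id (hM : M ≤ k) :
    (k + 1) * (monoSeqs id M k).ncard = (k + 1 - M) * (k + M).choose M := by
  have hballot := ncard_monoSeqs_id_add_choose k M hM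
  have hstep := Nat.choose_succ_right_eq (k + M) k
  rw [Nat.add_sub_cancel_left] at hstep
  rw [Nat.choose_symm_add] at hstep hballot
  zify [show M ≤ k + 1 by omega] at *
  linear_combination (↑k + 1) * hballot - hstep

end monoSeqs

structure IsTentSeq (n p m : ℕ) (e : ℕ → ℕ) : Prop where
  zero : e 0 = 0
  lt_self : ∀ i ∈ Icc 1 p, e i < i
  monotoneOn : MonotoneOn e (Icc 1 p)
  peak : e p = m
  antitoneOn : AntitoneOn e (Ioc p n)
  lt_peak : ∀ i ∈ Ioc p n, e i < m
  eq_zero : ∀ i, n < i → e i = 0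

section Characterization

variable {n p m : ℕ} {e : ℕ → ℕ}

lemma PrMax.monotoneOn (h : PrMax n e p) : MonotoneOn e (Icc 1 p) :=
  monotoneOn_of_le_succ ordConnected_Icc fun i _ hi hsi => by
    rw [Order.succ_eq_add_one] at hsi ⊢
    exact h.2.2.1 i hi.1 hsi.2

lemma PrMax.le_of_not_contains (h : PrMax n e p) (h102 : ¬ Contains n Pat102 e) :
    ∀ i ∈ Icc 1 n, e i ≤ e p := by
  rintro i ⟨hi, hin⟩
  rcases le_or_gt i p with hip | hpi
  · exact h.monotoneOn ⟨hi, hip⟩ ⟨h.1, le_rfl⟩ hip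
  have hdesc : e (p + 1) < e p := h.2.2.2.resolve_left (by omega)
  by_contra! hlt
  rcases (Nat.succ_le_of_lt hpi).eq_or_lt with rfl | hpi'
  · exact lt_asymm hdesc hlt
  · exact h102 ⟨p, p + 1, i, h.1, lt_add_one p, hpi', hin, hdesc, hlt⟩

lemma antitoneOn_Ioc_of_not_contains (hp : 1 ≤ p) (hmax : ∀ i ∈ Icc 1 n, e i ≤ e p)
    (h201 : ¬ Contains n Pat201 e) (h101 : ¬ Contains n Pat101 e) : AntitoneOn e (Ioc p n) := by
  rintro i ⟨hpi, -⟩ j ⟨-, hjn⟩ hij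
  by_contra! hlt
  have hij' : i < j := hij.lt_of_ne (by rintro rfl; exact lt_irrefl _ hlt)
  rcases (hmax j ⟨by omega, hjn⟩).lt_or_eq with hjp | hjp
  · exact h201 ⟨p, i, j, hp, hpi, hij', hjn, hlt, hjp⟩
  · exact h101 ⟨p, i, j, hp, hpi, hij', hjn, hjp.symm, hlt.trans_eq hjp⟩

lemma isTentSeq_of_not_contains (hinv : IsInvSeq n e) (hp : PrMax n e p) (hmax : IsMaxVal n e m)
    (h102 : ¬ Contains n Pat102 e) (h201 : ¬ Contains n Pat201 e)
    (h101 : ¬ Contains n Pat101 e) : IsTentSeq n p m e := by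
  have hle := hp.le_of_not_contains h102
  have hpeak : e p = m := by
    obtain ⟨i, hi, hin, rfl⟩ := hmax.2
    exact le_antisymm (hmax.1 p hp.1 hp.2.1) (hle i ⟨hi, hin⟩)
  have hanti := antitoneOn_Ioc_of_not_contains hp.1 hle h201 h101
  refine ⟨hinv.1, fun i hi => hinv.2.1 i hi.1 (hi.2.trans hp.2.1), hp.monotoneOn, hpeak, hanti,
    fun i hi => ?_, hinv.2.2⟩
  obtain ⟨hpi, hin⟩ := hi
  have hdesc : e (p + 1) < e p := hp.2.2.2.resolve_left (by omega)
  exact (hanti ⟨lt_add_one p, by omega⟩ ⟨hpi, hin⟩ hpi).trans_lt (hpeak ▸ hdesc)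

namespace IsTentSeq

lemma not_contains {P : ℕ → ℕ → ℕ → Prop} (h : IsTentSeq n p m e)
    (hP : ∀ a b c, P a b c → b < a ∧ b < c) : ¬ Contains n P e := by
  rintro ⟨i, j, k, hi, hij, hjk, hkn, hpat⟩
  obtain ⟨hji, hjk'⟩ := hP _ _ _ hpat
  rcases le_or_gt j p with hjp | hpj
  · exact (h.monotoneOn ⟨hi, by omega⟩ ⟨by omega, hjp⟩ hij.le).not_gt hji
  · exact (h.antitoneOn ⟨hpj, by omega⟩ ⟨by omega, hkn⟩ hjk.le).not_gt hjk'

lemma le_peak (h : IsTentSeq n p m e) (hp : 1 ≤ p) : ∀ i ∈ Icc 1 n, e i ≤ m := by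
  rintro i ⟨hi, hin⟩
  rcases le_or_gt i p with hip | hpi
  · exact h.peak ▸ h.monotoneOn ⟨hi, hip⟩ ⟨hp, le_rfl⟩ hip
  · exact (h.lt_peak i ⟨hpi, hin⟩).le

lemma isInvSeq (h : IsTentSeq n p m e) (hp : 1 ≤ p) : IsInvSeq n e := by
  refine ⟨h.zero, fun i hi hin => ?_, h.eq_zero⟩
  rcases le_or_gt i p with hip | hpi
  · exact h.lt_self i ⟨hi, hip⟩
  · have := h.lt_self p ⟨hp, le_rfl⟩
    have := h.lt_peak i ⟨hpi, hin⟩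
    rw [h.peak] at *
    omega

lemma prMax (h : IsTentSeq n p m e) (hp : 1 ≤ p) (hpn : p ≤ n) : PrMax n e p := by
  refine ⟨hp, hpn, fun i hi hip => h.monotoneOn ⟨hi, hip.le⟩ ⟨by omega, hip⟩ i.le_succ, ?_⟩
  rcases hpn.eq_or_lt with rfl | hlt
  · exact Or.inl rfl
  · exact Or.inr (h.peak ▸ h.lt_peak (p + 1) ⟨lt_add_one p, hlt⟩)

lemma isMaxVal (h : IsTentSeq n p m e) (hp : 1 ≤ p) (hpn : p ≤ n) : IsMaxVal n e m :=
  ⟨fun i hi hin => h.le_peak hp i ⟨hi, hin⟩, p, hp, hpn, h.peak⟩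

end IsTentSeq

theorem setOf_avoiding_eq_setOf_isTentSeq {t : ℕ} (hn : m + t + 1 ≤ n) :
    {e : ℕ → ℕ | IsInvSeq n e ∧ ¬ Contains n Pat102 e ∧ ¬ Contains n Pat201 e ∧
      ¬ Contains n Pat101 e ∧ HasRank n e t ∧ IsMaxVal n e m} =
      {e | IsTentSeq n (m + t + 1) m e} := by
  ext e
  constructor
  · rintro ⟨hinv, h102, h201, h101, ⟨p, hp, hrank⟩, hmax⟩
    have htent := isTentSeq_of_not_contains hinv hp hmax h102 h201 h101
    rw [htent.peak] at hrank
    exact hrank ▸ htent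
  · intro h
    have hp : 1 ≤ m + t + 1 := by omega
    refine ⟨h.isInvSeq hp, h.not_contains ?_, h.not_contains ?_, h.not_contains ?_,
      ⟨_, h.prMax hp hn, by rw [h.peak]⟩, h.isMaxVal hp hn⟩
    · rintro a b c ⟨hba, hac⟩; exact ⟨hba, hba.trans hac⟩
    · rintro a b c ⟨hbc, hca⟩; exact ⟨hbc.trans hca, hbc⟩
    · rintro a b c ⟨rfl, hba⟩; exact ⟨hba, hba⟩

end Characterization

section Counting

variable {n k m : ℕ}

/-- The suffix is read backwards, so that both halves are weakly increasing. -/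
def tentSplit (n k : ℕ) (e : ℕ → ℕ) : (ℕ → ℕ) × (ℕ → ℕ) :=
  (fun i => if i < k then e (i + 1) else 0, fun j => if j < n - (k + 1) then e (n - j) else 0)

def tentGlue (n k m : ℕ) (x : (ℕ → ℕ) × (ℕ → ℕ)) (i : ℕ) : ℕ :=
  if i = 0 then 0 else if i ≤ k then x.1 (i - 1) else if i = k + 1 then m
  else if i ≤ n then x.2 (n - i) else 0

variable {x : (ℕ → ℕ) × (ℕ → ℕ)} {i : ℕ}

lemma tentGlue_zero : tentGlue n k m x 0 = 0 := rfl

lemma tentGlue_of_le (hi : 1 ≤ i) (hik : i ≤ k) : tentGlue n k m x i = x.1 (i - 1) := by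
  rw [tentGlue, if_neg (by omega), if_pos hik]

lemma tentGlue_peak : tentGlue n k m x (k + 1) = m := by
  rw [tentGlue, if_neg (by omega), if_neg (by omega), if_pos rfl]

lemma tentGlue_of_lt (hki : k + 1 < i) (hin : i ≤ n) : tentGlue n k m x i = x.2 (n - i) := by
  rw [tentGlue, if_neg (by omega), if_neg (by omega), if_neg (by omega), if_pos hin]

lemma tentGlue_of_gt (hkn : k + 1 ≤ n) (hni : n < i) : tentGlue n k m x i = 0 := by
  rw [tentGlue, if_neg (by omega), if_neg (by omega), if_neg (by omega), if_neg (by omega)]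

lemma mapsTo_tentSplit :
    MapsTo (tentSplit n k) {e | IsTentSeq n (k + 1) m e}
      (monoSeqs id m k ×ˢ monoSeqs (fun _ => m - 1) (m - 1) (n - (k + 1))) := by
  intro e h
  refine ⟨⟨fun i hi j hj hij => ?_, fun i hi => ?_, fun i hi => ?_⟩,
    ⟨fun i hi j hj hij => ?_, fun i hi => ?_, fun i hi => ?_⟩⟩ <;>
    simp only [tentSplit, mem_Iio] at hi ⊢
  · have hj' := mem_Iio.mp hj
    rw [if_pos hi, if_pos hj']
    exact h.monotoneOn ⟨by omega, by omega⟩ ⟨by omega, by omega⟩ (by omega)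
  · rw [if_pos hi]
    exact ⟨Nat.le_of_lt_succ (h.lt_self _ ⟨by omega, by omega⟩),
      h.peak ▸ h.monotoneOn ⟨by omega, by omega⟩ ⟨by omega, le_rfl⟩ (by omega)⟩
  · rw [if_neg (by omega)]
  · have hj' := mem_Iio.mp hj
    rw [if_pos hi, if_pos hj']
    exact h.antitoneOn ⟨by omega, by omega⟩ ⟨by omega, by omega⟩ (by omega)
  · rw [if_pos hi]
    have := h.lt_peak (n - i) ⟨by omega, by omega⟩
    exact ⟨by omega, by omega⟩
  · rw [if_neg (by omega)]

lemma mapsTo_tentGlue (hm : 1 ≤ m) (hmk : m ≤ k) (hkn : k + 1 ≤ n) :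
    MapsTo (tentGlue n k m) (monoSeqs id m k ×ˢ monoSeqs (fun _ => m - 1) (m - 1) (n - (k + 1)))
      {e | IsTentSeq n (k + 1) m e} := by
  rintro ⟨f, g⟩ ⟨⟨hfmono, hfbound, -⟩, ⟨hgmono, hgbound, -⟩⟩
  have hle_peak : ∀ i, 1 ≤ i → i ≤ k + 1 → tentGlue n k m (f, g) i ≤ m := fun i hi hik => by
    rcases hik.lt_or_eq with hik | rfl
    · rw [tentGlue_of_le hi (by omega)]; exact (hfbound _ (by omega)).2
    · rw [tentGlue_peak]
  refine ⟨tentGlue_zero, fun i ⟨hi, hik⟩ => ?_, fun i ⟨hi, _⟩ j ⟨_, hjk⟩ hij => ?_,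
    tentGlue_peak, fun i ⟨hki, _⟩ j ⟨_, hjn⟩ hij => ?_, fun i ⟨hki, hin⟩ => ?_,
    fun i hni => tentGlue_of_gt hkn hni⟩
  · rcases hik.lt_or_eq with hik | rfl
    · rw [tentGlue_of_le hi (by omega)]
      exact (hfbound (i - 1) (by omega)).1.trans_lt (by simp only [id]; omega)
    · rw [tentGlue_peak]; omega
  · rcases hjk.lt_or_eq with hjk | rfl
    · rw [tentGlue_of_le hi (by omega), tentGlue_of_le (by omega) (by omega)]
      exact hfmono (mem_Iio.2 (by omega)) (mem_Iio.2 (by omega)) (by omega)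
    · rw [tentGlue_peak]; exact hle_peak i hi (by omega)
  · rw [tentGlue_of_lt hki (by omega), tentGlue_of_lt (by omega) hjn]
    exact hgmono (mem_Iio.2 (by omega)) (mem_Iio.2 (by omega)) (by omega)
  · rw [tentGlue_of_lt hki hin]
    have := (hgbound (n - i) (by omega)).2
    omega

lemma leftInvOn_tentGlue_tentSplit (hkn : k + 1 ≤ n) :
    LeftInvOn (tentGlue n k m) (tentSplit n k) {e | IsTentSeq n (k + 1) m e} := by
  intro e h
  funext i
  rcases lt_or_ge n i with hni | hin
  · rw [tentGlue_of_gt hkn hni, h.eq_zero i hni]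
  rcases lt_or_ge (k + 1) i with hki | hik
  · rw [tentGlue_of_lt hki hin]
    dsimp only [tentSplit]
    rw [if_pos (by omega), Nat.sub_sub_self hin]
  rcases hik.lt_or_eq with hik | rfl
  · rcases Nat.eq_zero_or_pos i with rfl | hi
    · rw [tentGlue_zero, h.zero]
    · rw [tentGlue_of_le hi (by omega)]
      dsimp only [tentSplit]
      rw [if_pos (by omega), Nat.sub_add_cancel hi]
  · rw [tentGlue_peak, h.peak]

lemma rightInvOn_tentGlue_tentSplit :
    RightInvOn (tentGlue n k m) (tentSplit n k)
      (monoSeqs id m k ×ˢ monoSeqs (fun _ => m - 1) (m - 1) (n - (k + 1))) := by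
  rintro ⟨f, g⟩ ⟨⟨-, -, hfzero⟩, ⟨-, -, hgzero⟩⟩
  refine Prod.ext (funext fun i => ?_) (funext fun j => ?_) <;> simp only [tentSplit]
  · split_ifs with hi
    · rw [tentGlue_of_le (i := i + 1) (by omega) hi, Nat.add_sub_cancel]
    · exact (hfzero i (by omega)).symm
  · split_ifs with hj
    · rw [tentGlue_of_lt (by omega) (by omega), Nat.sub_sub_self (by omega)]
    · exact (hgzero j (by omega)).symm

theorem ncard_setOf_isTentSeq (hm : 1 ≤ m) (hmk : m ≤ k) (hkn : k + 1 ≤ n) :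
    {e | IsTentSeq n (k + 1) m e}.ncard =
      (monoSeqs id m k).ncard * (monoSeqs (fun _ => m - 1) (m - 1) (n - (k + 1))).ncard := by
  rw [← ncard_prod]
  exact (InvOn.bijOn ⟨leftInvOn_tentGlue_tentSplit hkn, rightInvOn_tentGlue_tentSplit⟩
    mapsTo_tentSplit (mapsTo_tentGlue hm hmk hkn)).ncard_eq

end Counting

theorem stmt12_general (n t m : ℕ) (hm1 : 1 ≤ m)
    (hm2 : m ≤ n - t - 1) :
    (m + t + 1) *
      {e : ℕ → ℕ | IsInvSeq n e ∧ ¬ Contains n Pat102 e ∧ ¬ Contains n Pat201 e ∧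
        ¬ Contains n Pat101 e ∧ HasRank n e t ∧ IsMaxVal n e m}.ncard =
    (t + 1) * Nat.choose (2 * m + t) m * Nat.choose (n - t - 2) (m - 1) := by
  have hn : m + t + 1 ≤ n := by omega
  rw [setOf_avoiding_eq_setOf_isTentSeq hn, ncard_setOf_isTentSeq hm1 (by omega) hn, ← mul_assoc,
    mul_ncard_monoSeqs_id (by omega), ncard_monoSeqs_of_forall_le _ _ fun _ => le_rfl]
  rw [show m + t + 1 - m = t + 1 by omega, show m + t + m = 2 * m + t by omega,
    show n - (m + t + 1) + (m - 1) = n - t - 2 by omega]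

theorem stmt12 (n t m : ℕ) (hn : 1 ≤ n) (ht : t ≤ n - 2) (hm1 : 1 ≤ m)
    (hm2 : m ≤ n - t - 1) :
    (m + t + 1) *
      {e : ℕ → ℕ | IsInvSeq n e ∧ ¬ Contains n Pat102 e ∧ ¬ Contains n Pat201 e ∧
        ¬ Contains n Pat101 e ∧ HasRank n e t ∧ IsMaxVal n e m}.ncard =
    (t + 1) * Nat.choose (2 * m + t) m * Nat.choose (n - t - 2) (m - 1) :=
  stmt12_general n t m hm1 hm2
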